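/- Every finite undirected graph G = (V,E) contains an induced k-degenerate subgraph on at least Σ_{v∈V} min(1, k/(d(v)+1)) vertices. -/

import Mathlib

/-!
Grow the degenerate set greedily while shrinking the ambient vertex set `s`, keeping track of the
potential `∑ v ∈ s, min 1 (k / (d_s(v) + 1))`, where `d_s` is the degree inside `s`. A vertex with
fewer than `k` neighbours in `s` is moved into the degenerate set; the potential drops by at most
one. If there is no such vertex, a vertex `v` of maximum degree `d ≥ k` is discarded: this loses
`k / (d + 1)`, but each of the `d` neighbours of `v`, of degree `m` with `k ≤ m ≤ d`, gains
`k / m - k / (m + 1) ≥ k / (d (d + 1))`, so the potential does not drop.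
-/

/-- A set `T` is closed under the threshold-`k` activation rule: every vertex with at
least `k` neighbors in `T` belongs to `T`. -/
def ClosedUnder {V : Type*} (G : SimpleGraph V) (k : ℕ) (T : Set V) : Prop :=
  ∀ v : V, k ≤ {u : V | G.Adj v u ∧ u ∈ T}.ncard → v ∈ T

/-- `A` is contagious with threshold `k`: the activation process starting from `A`
(equivalently, the least `ClosedUnder`-closed superset of `A`) activates every vertex. -/
def Contagious {V : Type*} (G : SimpleGraph V) (k : ℕ) (A : Set V) : Prop :=
  ∀ T : Set V, A ⊆ T → ClosedUnder G k T → ∀ v : V, v ∈ T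

open Finset

noncomputable def degenWeight (k d : ℕ) : ℝ := min 1 (k / (d + 1))

lemma degenWeight_le_one (k d : ℕ) : degenWeight k d ≤ 1 := min_le_left _ _

lemma degenWeight_antitone (k : ℕ) : Antitone (degenWeight k) := fun a b hab =>
  min_le_min le_rfl (div_le_div_of_nonneg_left (by positivity) (by positivity) (by gcongr))

lemma degenWeight_of_le {k d : ℕ} (h : k ≤ d + 1) : degenWeight k d = k / (d + 1) :=
  min_eq_right ((div_le_one (by positivity)).2 (by exact_mod_cast h))

lemma degenWeight_le_mul_div {k d : ℕ} (h : k ≤ d) :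
    degenWeight k d ≤ d * (k / (d * (d + 1))) := by
  rcases Nat.eq_zero_or_pos d with rfl | hd
  · simp [degenWeight, Nat.le_zero.1 h]
  · rw [mul_div_assoc', mul_div_mul_left _ _ (by positivity)]
    exact min_le_right _ _

lemma div_le_degenWeight_sub_succ {k n d : ℕ} (hk : k ≤ n + 1) (hd : n + 1 ≤ d) :
    (k : ℝ) / (d * (d + 1)) ≤ degenWeight k n - degenWeight k (n + 1) := by
  rw [degenWeight_of_le hk, degenWeight_of_le (by omega)]
  have hd' : (n : ℝ) + 1 ≤ d := by exact_mod_cast hd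
  calc (k : ℝ) / (d * (d + 1)) ≤ k / ((n + 1) * (n + 1 + 1)) := by gcongr
    _ = k / (n + 1) - k / ((n + 1 : ℕ) + 1) := by push_cast; field_simp; ring

namespace SimpleGraph

variable {V : Type*} (G : SimpleGraph V) [DecidableRel G.Adj]

def degreeIn (s : Finset V) (v : V) : ℕ := #{u ∈ s | G.Adj v u}

def DegenerateOn (k : ℕ) (s : Finset V) : Prop :=
  ∀ t ⊆ s, t.Nonempty → ∃ v ∈ t, G.degreeIn t v < k

lemma degreeIn_mono {s t : Finset V} (h : s ⊆ t) (v : V) : G.degreeIn s v ≤ G.degreeIn t v :=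
  card_le_card (filter_subset_filter _ h)

lemma degreeIn_univ [Fintype V] (v : V) : G.degreeIn univ v = G.degree v := by
  rw [← card_neighborFinset_eq_degree, neighborFinset_eq_filter, degreeIn]

lemma degenerateOn_empty (k : ℕ) : G.DegenerateOn k ∅ :=
  fun _ ht htne => absurd (subset_empty.1 ht) htne.ne_empty

noncomputable def weightSum (k : ℕ) (s : Finset V) : ℝ :=
  ∑ v ∈ s, degenWeight k (G.degreeIn s v)

variable [DecidableEq V] {k : ℕ} {s : Finset V} {v : V}

lemma degreeIn_erase_self : G.degreeIn (s.erase v) v = G.degreeIn s v := by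
  rw [degreeIn, filter_erase, erase_eq_of_notMem (by simp), degreeIn]

lemma degreeIn_erase_add_one {u : V} (hv : v ∈ s) (huv : G.Adj u v) :
    G.degreeIn (s.erase v) u + 1 = G.degreeIn s u := by
  rw [degreeIn, filter_erase, card_erase_add_one (mem_filter.2 ⟨hv, huv⟩), degreeIn]

variable {G} in
lemma DegenerateOn.insert (hs : G.DegenerateOn k s)
    (hv : G.degreeIn (insert v s) v < k) : G.DegenerateOn k (insert v s) := by
  intro t ht htne
  by_cases hvt : v ∈ t
  · exact ⟨v, hvt, (G.degreeIn_mono ht v).trans_lt hv⟩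
  · exact hs t ((subset_insert_iff_of_notMem hvt).1 ht) htne

lemma weightSum_le_weightSum_erase_add_one (hv : v ∈ s) :
    G.weightSum k s ≤ G.weightSum k (s.erase v) + 1 := by
  rw [weightSum, ← add_sum_erase _ _ hv, add_comm]
  gcongr ?_ + ?_
  · exact sum_le_sum fun u _ => degenWeight_antitone k (G.degreeIn_mono (erase_subset v s) u)
  · exact degenWeight_le_one _ _

lemma weightSum_le_weightSum_erase (hv : v ∈ s) (hk : ∀ u ∈ s, k ≤ G.degreeIn s u)
    (hmax : ∀ u ∈ s, G.degreeIn s u ≤ G.degreeIn s v) :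
    G.weightSum k s ≤ G.weightSum k (s.erase v) := by
  set d := G.degreeIn s v
  let gain (u : V) : ℝ :=
    degenWeight k (G.degreeIn (s.erase v) u) - degenWeight k (G.degreeIn s u)
  have hgain : degenWeight k d ≤ ∑ u ∈ s.erase v, gain u := calc
    degenWeight k d ≤ d * (k / (d * (d + 1))) := degenWeight_le_mul_div (hk v hv)
    _ = ∑ u ∈ s.erase v with G.Adj v u, (k : ℝ) / (d * (d + 1)) := by
      rw [sum_const, nsmul_eq_mul, ← degreeIn, degreeIn_erase_self]
    _ ≤ ∑ u ∈ s.erase v with G.Adj v u, gain u := by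
      refine sum_le_sum fun u hu => ?_
      obtain ⟨hus, hvu⟩ := mem_filter.1 hu
      have hsucc := G.degreeIn_erase_add_one hv hvu.symm
      simp only [gain, ← hsucc]
      exact div_le_degenWeight_sub_succ (hsucc ▸ hk u (mem_of_mem_erase hus))
        (hsucc ▸ hmax u (mem_of_mem_erase hus))
    _ ≤ ∑ u ∈ s.erase v, gain u := sum_le_sum_of_subset_of_nonneg (filter_subset _ _)
      fun u _ _ => sub_nonneg.2 (degenWeight_antitone k (G.degreeIn_mono (erase_subset v s) u))
  have hsplit := add_sum_erase s (fun u => degenWeight k (G.degreeIn s u)) hv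
  simp only [gain, sum_sub_distrib] at hgain
  rw [weightSum, weightSum, ← hsplit]
  linarith

variable (k s)

theorem exists_degenerateOn_weightSum_le_card :
    ∃ S ⊆ s, G.DegenerateOn k S ∧ G.weightSum k s ≤ #S := by
  induction s using strongInduction with
  | _ s ih =>
  rcases s.eq_empty_or_nonempty with rfl | hne
  · exact ⟨∅, subset_rfl, G.degenerateOn_empty k, by simp [weightSum]⟩
  by_cases hlow : ∃ v ∈ s, G.degreeIn s v < k
  · obtain ⟨v, hv, hvk⟩ := hlow
    obtain ⟨S, hSs, hS, hSw⟩ := ih (s.erase v) (erase_ssubset hv)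
    have hvS : v ∉ S := fun h => notMem_erase v s (hSs h)
    have hSs' : insert v S ⊆ s := insert_subset hv (hSs.trans (erase_subset v s))
    refine ⟨insert v S, hSs', hS.insert ((G.degreeIn_mono hSs' v).trans_lt hvk), ?_⟩
    rw [card_insert_of_notMem hvS, Nat.cast_succ]
    linarith [G.weightSum_le_weightSum_erase_add_one (k := k) hv]
  · push Not at hlow
    obtain ⟨v, hv, hmax⟩ := s.exists_max_image (G.degreeIn s) hne
    obtain ⟨S, hSs, hS, hSw⟩ := ih (s.erase v) (erase_ssubset hv)
    exact ⟨S, hSs.trans (erase_subset v s), hS,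
      (G.weightSum_le_weightSum_erase hv hlow hmax).trans hSw⟩

end SimpleGraph

theorem stmt_5_general {V : Type*} [Fintype V] [DecidableEq V] (G : SimpleGraph V)
    [DecidableRel G.Adj] (k : ℕ) :
    ∃ s : Finset V, (∑ v : V, min 1 ((k : ℝ) / (G.degree v + 1))) ≤ s.card ∧
      ∀ t ⊆ s, t.Nonempty → ∃ v ∈ t, (t.filter (fun u => G.Adj v u)).card < k := by
  obtain ⟨S, -, hS, hSw⟩ := G.exists_degenerateOn_weightSum_le_card k Finset.univ
  refine ⟨S, ?_, hS⟩
  simpa only [SimpleGraph.weightSum, degenWeight, SimpleGraph.degreeIn_univ] using hSw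

theorem stmt_5 {V : Type*} [Fintype V] [DecidableEq V] (G : SimpleGraph V)
    [DecidableRel G.Adj] (k : ℕ) (hk : 0 < k) :
    ∃ s : Finset V, (∑ v : V, min 1 ((k : ℝ) / (G.degree v + 1))) ≤ s.card ∧
      ∀ t ⊆ s, t.Nonempty → ∃ v ∈ t, (t.filter (fun u => G.Adj v u)).card < k :=
  stmt_5_general G k
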